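/- Let M ≥ 4 be an odd integer with M ≡ 1 (mod 4) (i.e., corresponding to T = (M−1)/2 even), and let θ_ℓ = cos(2πℓ/M) for ℓ = 1,…,(M−1)/2. Then ∑_{ℓ=1}^{(M−1)/2} 1/θ_ℓ ≥ 1/sin(π/(2M)) − 1/sin(3π/(2M)), and this quantity is at least M/π for M ≥ 4. -/

import Mathlib

open Real

set_option maxHeartbeats 1600000 in
/-- **Lower bound on the sum of inverse clock eigenvalues.**
Let `M ≥ 4` with `M ≡ 1 (mod 4)` and `θ_ℓ = cos(2πℓ/M)` for `ℓ = 1,…,(M−1)/2`. Then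
`∑_{ℓ=1}^{(M−1)/2} 1/θ_ℓ ≥ 1/sin(π/(2M)) − 1/sin(3π/(2M))`, and this quantity is at
least `M/π`. -/
theorem sum_inverse_clock_eigenvalues (M : ℕ) (hM : 4 ≤ M) (hmod : M % 4 = 1) :
    (∑ ℓ ∈ Finset.Icc 1 ((M - 1) / 2), 1 / Real.cos (2 * Real.pi * ℓ / M) ≥
      1 / Real.sin (Real.pi / (2 * M)) - 1 / Real.sin (3 * Real.pi / (2 * M))) ∧
    1 / Real.sin (Real.pi / (2 * M)) - 1 / Real.sin (3 * Real.pi / (2 * M)) ≥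
      M / Real.pi := by
  obtain ⟨m, rfl⟩ : ∃ m, M = 4 * m + 1 := ⟨M / 4, by omega⟩
  have hm : 1 ≤ m := by omega
  have hMr : ((4 * m + 1 : ℕ) : ℝ) = 4 * (m : ℝ) + 1 := by push_cast; ring
  set Mr : ℝ := 4 * (m : ℝ) + 1 with hMrdef
  clear_value Mr
  have hm1 : (1 : ℝ) ≤ (m : ℝ) := by exact_mod_cast hm
  have hMr5 : (5 : ℝ) ≤ Mr := by rw [hMrdef]; nlinarith
  have hMrpos : (0 : ℝ) < Mr := by linarith
  have hMne : Mr ≠ 0 := ne_of_gt hMrpos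
  have hpi := Real.pi_pos
  set f : ℕ → ℝ := fun ℓ => 1 / Real.cos (2 * Real.pi * ℓ / ((4 * m + 1 : ℕ) : ℝ)) with hf
  have sin_pos : ∀ x : ℝ, 0 < x → x < 2 * Mr → 0 < Real.sin (x * Real.pi / (2 * Mr)) := by
    intro x hx hx2
    apply Real.sin_pos_of_pos_of_lt_pi
    · positivity
    · rw [div_lt_iff₀ (by linarith)]
      nlinarith
  -- the paired terms
  have key : ∀ j : ℕ, j < m → f (m - j) + f (m + 1 + j)
      = 1 / Real.sin ((4 * j + 1) * Real.pi / (2 * Mr))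
        - 1 / Real.sin ((4 * j + 3) * Real.pi / (2 * Mr)) := by
    intro j hj
    have hjm : (j : ℝ) ≤ (m : ℝ) := by exact_mod_cast hj.le
    have h1 : Real.cos (2 * Real.pi * ((m - j : ℕ) : ℝ) / ((4 * m + 1 : ℕ) : ℝ))
        = Real.sin ((4 * j + 1) * Real.pi / (2 * Mr)) := by
      rw [Nat.cast_sub hj.le,
        ← Real.sin_pi_div_two_sub (2 * Real.pi * ((m : ℝ) - j) / ((4 * m + 1 : ℕ) : ℝ))]
      congr 1
      rw [hMr]
      field_simp
      rw [hMrdef]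
      ring
    have h2 : Real.cos (2 * Real.pi * ((m + 1 + j : ℕ) : ℝ) / ((4 * m + 1 : ℕ) : ℝ))
        = -Real.sin ((4 * j + 3) * Real.pi / (2 * Mr)) := by
      have hc : ((m + 1 + j : ℕ) : ℝ) = (m : ℝ) + 1 + (j : ℝ) := by push_cast; ring
      rw [hc, hMr,
        ← Real.sin_pi_div_two_sub (2 * Real.pi * ((m : ℝ) + 1 + (j : ℝ)) / Mr),
        show Real.pi / 2 - 2 * Real.pi * ((m : ℝ) + 1 + (j : ℝ)) / Mr
          = -((4 * (j : ℝ) + 3) * Real.pi / (2 * Mr)) by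
            field_simp; rw [hMrdef]; ring,
        Real.sin_neg]
    simp only [hf]
    rw [h1, h2]
    ring
  -- each paired term is nonnegative
  have pair_nonneg : ∀ j : ℕ, j < m → 0 ≤ f (m - j) + f (m + 1 + j) := by
    intro j hj
    rw [key j hj]
    have hjm : (j : ℝ) ≤ (m : ℝ) - 1 := by
      have : (j : ℝ) + 1 ≤ (m : ℝ) := by exact_mod_cast hj
      linarith
    have hb2 : (4 * (j : ℝ) + 3) < 2 * Mr := by rw [hMrdef]; nlinarith
    have hp1 : 0 < Real.sin ((4 * j + 1) * Real.pi / (2 * Mr)) := by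
      refine sin_pos _ ?_ ?_
      · positivity
      · nlinarith
    have hp2 : 0 < Real.sin ((4 * j + 3) * Real.pi / (2 * Mr)) := by
      refine sin_pos _ ?_ ?_
      · positivity
      · exact hb2
    have hmono : Real.sin ((4 * j + 1) * Real.pi / (2 * Mr))
        ≤ Real.sin ((4 * j + 3) * Real.pi / (2 * Mr)) := by
      apply Real.sin_le_sin_of_le_of_le_pi_div_two
      · have h0 : (0:ℝ) ≤ (4 * (j:ℝ) + 1) * Real.pi / (2 * Mr) := by positivity
        linarith
      · rw [div_le_iff₀ (by linarith)]
        have h43 : (4 * (j : ℝ) + 3) ≤ Mr := by rw [hMrdef]; nlinarith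
        nlinarith
      · gcongr
        linarith
    have := one_div_le_one_div_of_le hp1 hmono
    linarith
  -- rewrite the sum as a sum of pairs
  have hidx : (4 * m + 1 - 1) / 2 = 2 * m := by omega
  have hsum : ∑ ℓ ∈ Finset.Icc 1 ((4 * m + 1 - 1) / 2), f ℓ
      = ∑ j ∈ Finset.range m, (f (m - j) + f (m + 1 + j)) := by
    rw [hidx]
    have e1 : Finset.Icc 1 (2 * m) = Finset.Ico 1 (2 * m + 1) := by
      rw [Finset.Ico_add_one_right_eq_Icc]
    rw [e1, ← Finset.sum_Ico_consecutive f (by omega : 1 ≤ m + 1) (by omega : m + 1 ≤ 2 * m + 1)]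
    have e2 : ∑ ℓ ∈ Finset.Ico 1 (m + 1), f ℓ = ∑ j ∈ Finset.range m, f (m - j) := by
      rw [Finset.sum_Ico_eq_sum_range]
      simp only [Nat.add_sub_cancel]
      rw [← Finset.sum_range_reflect (fun i => f (1 + i)) m]
      apply Finset.sum_congr rfl
      intro j hj
      simp only [Finset.mem_range] at hj
      congr 1
      omega
    have e3 : ∑ ℓ ∈ Finset.Ico (m + 1) (2 * m + 1), f ℓ
        = ∑ j ∈ Finset.range m, f (m + 1 + j) := by
      rw [Finset.sum_Ico_eq_sum_range]
      apply Finset.sum_congr (by congr 1; omega) (fun _ _ => rfl)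
    rw [e2, e3, ← Finset.sum_add_distrib]
  -- part 1
  have part1 : ∑ ℓ ∈ Finset.Icc 1 ((4 * m + 1 - 1) / 2), f ℓ
      ≥ 1 / Real.sin (Real.pi / (2 * Mr)) - 1 / Real.sin (3 * Real.pi / (2 * Mr)) := by
    rw [hsum]
    have h0 : f (m - 0) + f (m + 1 + 0)
        = 1 / Real.sin (Real.pi / (2 * Mr)) - 1 / Real.sin (3 * Real.pi / (2 * Mr)) := by
      rw [key 0 hm]
      norm_num
    rw [← h0]
    exact Finset.single_le_sum (fun j hj => pair_nonneg j (Finset.mem_range.mp hj))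
      (Finset.mem_range.mpr hm)
  -- part 2
  have part2 : 1 / Real.sin (Real.pi / (2 * Mr)) - 1 / Real.sin (3 * Real.pi / (2 * Mr))
      ≥ Mr / Real.pi := by
    set x : ℝ := Real.pi / (2 * Mr) with hx
    clear_value x
    have hxpos : 0 < x := by rw [hx]; positivity
    have hpi315 := Real.pi_lt_d2
    have hpigt3 := Real.pi_gt_three
    have hxle : x ≤ 0.315 := by
      rw [hx, div_le_iff₀ (by linarith)]
      nlinarith
    have hs1 : Real.sin x ≤ x := le_of_lt (Real.sin_lt hxpos)
    have hs1pos : 0 < Real.sin x := Real.sin_pos_of_pos_of_lt_pi hxpos (by nlinarith)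
    have hA : 1 / x ≤ 1 / Real.sin x := one_div_le_one_div_of_le hs1pos hs1
    have h3x : 3 * Real.pi / (2 * Mr) = 3 * x := by rw [hx]; ring
    have hx2 : x ^ 2 ≤ (0.1 : ℝ) := by nlinarith
    have hx3 : x ^ 3 ≤ 0.1 * x := by nlinarith [mul_le_mul_of_nonneg_right hx2 hxpos.le]
    have hs3 : 2 * x ≤ Real.sin (3 * x) := by
      have hcube := Real.sin_gt_sub_cube (by linarith : (0:ℝ) < 3 * x)
      nlinarith
    have h2xpos : 0 < 2 * x := by linarith
    have hB : 1 / Real.sin (3 * x) ≤ 1 / (2 * x) := one_div_le_one_div_of_le h2xpos hs3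
    have hxval : 1 / x = 2 * Mr / Real.pi := by
      rw [hx]; field_simp
    have h2xval : 1 / (2 * x) = Mr / Real.pi := by
      rw [hx]; field_simp
    rw [h3x]
    have hmain : 1 / Real.sin x - 1 / Real.sin (3 * x) ≥ 1 / x - 1 / (2 * x) := by linarith
    rw [hxval, h2xval] at hmain
    have hsplit : 2 * Mr / Real.pi - Mr / Real.pi = Mr / Real.pi := by ring
    linarith
  refine ⟨?_, ?_⟩
  · rw [hMr]
    exact part1
  · rw [hMr]
    exact part2
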